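/- Define N_∞(θ) := (θᵀθ)/2 − E_{X∼N_d(θ₀,I_d)} log cosh(θᵀX) for θ₀ ∈ ℝ^d fixed. Then N_∞(θ) − N_∞(θ₀) = KL(P̄_{θ₀} ‖ P̄_θ) ≥ 0, where P̄_θ = (1/2)N_d(θ,I_d) + (1/2)N_d(−θ,I_d); in particular θ₀ minimizes N_∞. -/
import Mathlib


open MeasureTheory
open scoped RealInnerProductSpace ENNReal

/-- The multivariate Gaussian measure `N_d(μ, I_d)` on `ℝ^d`. -/
noncomputable def gaussian (d : ℕ) (μ : EuclideanSpace ℝ (Fin d)) :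
    Measure (EuclideanSpace ℝ (Fin d)) :=
  volume.withDensity
    (fun x => ENNReal.ofReal ((2 * Real.pi) ^ (-(d : ℝ) / 2) * Real.exp (-‖x - μ‖ ^ 2 / 2)))

/-- The symmetric two-component Gaussian mixture `P̄_θ = (1/2)N_d(θ,I_d) + (1/2)N_d(−θ,I_d)`. -/
noncomputable def symMix (d : ℕ) (θ : EuclideanSpace ℝ (Fin d)) :
    Measure (EuclideanSpace ℝ (Fin d)) :=
  (1 / 2 : ℝ≥0∞) • gaussian d θ + (1 / 2 : ℝ≥0∞) • gaussian d (-θ)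

/-- The Kullback–Leibler divergence `KL(P‖Q) = ∫ log(dP/dQ) dP`. -/
noncomputable def klDiv {α : Type*} [MeasurableSpace α] (P Q : Measure α) : ℝ :=
  ∫ x, Real.log ((P.rnDeriv Q) x).toReal ∂P

/-- The population objective `N_∞(θ) = θᵀθ/2 − E_{X∼N_d(θ₀,I_d)} log cosh(θᵀX)`. -/
noncomputable def Ninf (d : ℕ) (θ₀ θ : EuclideanSpace ℝ (Fin d)) : ℝ :=
  ⟪θ, θ⟫ / 2 - ∫ x, Real.log (Real.cosh ⟪θ, x⟫) ∂(gaussian d θ₀)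


section Helpers

open MeasureTheory Real
open scoped RealInnerProductSpace ENNReal

variable {d : ℕ}

local notation "E" => EuclideanSpace ℝ (Fin d)

/-- normalization constant -/
noncomputable def gaussConst (d : ℕ) : ℝ := (2 * Real.pi) ^ (-(d : ℝ) / 2)

lemma gaussConst_pos (d : ℕ) : 0 < gaussConst d :=
  Real.rpow_pos_of_pos (by positivity) _

/-- single gaussian density -/
noncomputable def gdens (d : ℕ) (μ : EuclideanSpace ℝ (Fin d)) (x : EuclideanSpace ℝ (Fin d)) : ℝ :=
  gaussConst d * Real.exp (-‖x - μ‖ ^ 2 / 2)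

lemma gdens_pos (μ x : E) : 0 < gdens d μ x :=
  mul_pos (gaussConst_pos d) (Real.exp_pos _)

lemma continuous_gdens (μ : E) : Continuous (gdens d μ) := by
  unfold gdens
  fun_prop

lemma integrable_exp_neg_mul_sq_norm {b : ℝ} (hb : 0 < b) :
    Integrable (fun x : E => Real.exp (-b * ‖x‖ ^ 2)) := by
  have h := (GaussianFourier.integrable_cexp_neg_mul_sq_norm_add (V := E)
      (b := (b : ℂ)) (by simpa using hb) 0 0).re
  refine h.congr (Filter.Eventually.of_forall fun x => ?_)
  simp [← Complex.ofReal_pow, ← Complex.ofReal_mul, ← Complex.ofReal_neg,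
    Complex.exp_ofReal_re]

lemma integral_exp_neg_norm_sq_div_two :
    ∫ x : E, Real.exp (-‖x‖ ^ 2 / 2) = (2 * Real.pi) ^ ((d : ℝ) / 2) := by
  have h := GaussianFourier.integral_rexp_neg_mul_sq_norm (V := E) (b := (1/2 : ℝ)) (by norm_num)
  rw [finrank_euclideanSpace_fin] at h
  have : ∀ x : E, Real.exp (-‖x‖ ^ 2 / 2) = Real.exp (-(1/2) * ‖x‖ ^ 2) := by
    intro x; ring_nf
  simp_rw [this, h]
  norm_num [div_div_eq_mul_div, mul_comm]

lemma integrable_gdens (μ : E) : Integrable (gdens d μ) := by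
  unfold gdens
  refine Integrable.const_mul ?_ _
  have h := (integrable_exp_neg_mul_sq_norm (d := d) (b := (1/2 : ℝ)) (by norm_num)).comp_sub_right μ
  refine h.congr (Filter.Eventually.of_forall fun x => ?_)
  ring_nf

lemma integral_gdens (μ : E) : ∫ x, gdens d μ x = 1 := by
  unfold gdens
  rw [integral_const_mul]
  have : ∀ x : E, Real.exp (-‖x - μ‖ ^ 2 / 2)
      = (fun y : E => Real.exp (-‖y‖ ^ 2 / 2)) (x - μ) := fun x => rfl
  rw [integral_congr_ae (Filter.Eventually.of_forall this),
    integral_sub_right_eq_self (fun y : E => Real.exp (-‖y‖ ^ 2 / 2)) μ,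
    integral_exp_neg_norm_sq_div_two]
  unfold gaussConst
  rw [← Real.rpow_add (by positivity)]
  rw [neg_div, neg_add_cancel, Real.rpow_zero]

/-- mixture density -/
noncomputable def mdens (d : ℕ) (θ : EuclideanSpace ℝ (Fin d)) (x : EuclideanSpace ℝ (Fin d)) : ℝ :=
  gaussConst d * Real.exp (-‖x‖ ^ 2 / 2 - ‖θ‖ ^ 2 / 2) * Real.cosh ⟪θ, x⟫

lemma mdens_pos (θ x : E) : 0 < mdens d θ x :=
  mul_pos (mul_pos (gaussConst_pos d) (Real.exp_pos _)) (Real.cosh_pos _)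

lemma continuous_mdens (θ : E) : Continuous (mdens d θ) := by
  unfold mdens
  have h1 : Continuous (fun x : E => ⟪θ, x⟫) := continuous_const.inner continuous_id
  fun_prop

lemma mdens_eq_avg (θ x : E) : mdens d θ x = gdens d θ x / 2 + gdens d (-θ) x / 2 := by
  unfold mdens gdens
  rw [Real.cosh_eq]
  have h1 : ‖x - θ‖ ^ 2 = ‖x‖ ^ 2 - 2 * ⟪x, θ⟫ + ‖θ‖ ^ 2 := norm_sub_sq_real x θ
  have h2 : ‖x - -θ‖ ^ 2 = ‖x‖ ^ 2 + 2 * ⟪x, θ⟫ + ‖θ‖ ^ 2 := by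
    rw [sub_neg_eq_add]; simpa using norm_add_sq_real x θ
  have h3 : ⟪θ, x⟫ = ⟪x, θ⟫ := real_inner_comm x θ
  rw [h1, h2, h3]
  rw [show -(‖x‖ ^ 2 - 2 * ⟪x, θ⟫ + ‖θ‖ ^ 2) / 2
      = (-‖x‖ ^ 2 / 2 - ‖θ‖ ^ 2 / 2) + ⟪x, θ⟫ by ring,
    show -(‖x‖ ^ 2 + 2 * ⟪x, θ⟫ + ‖θ‖ ^ 2) / 2
      = (-‖x‖ ^ 2 / 2 - ‖θ‖ ^ 2 / 2) + -⟪x, θ⟫ by ring,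
    Real.exp_add, Real.exp_add]
  ring

lemma integrable_mdens (θ : E) : Integrable (mdens d θ) := by
  have : Integrable (fun x : E => gdens d θ x / 2 + gdens d (-θ) x / 2) :=
    ((integrable_gdens θ).div_const 2).add ((integrable_gdens (-θ)).div_const 2)
  exact this.congr (Filter.Eventually.of_forall fun x => (mdens_eq_avg θ x).symm)

lemma integral_mdens (θ : E) : ∫ x, mdens d θ x = 1 := by
  simp_rw [mdens_eq_avg]
  rw [integral_add ((integrable_gdens θ).div_const 2) ((integrable_gdens (-θ)).div_const 2),
    integral_div, integral_div, integral_gdens, integral_gdens]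
  norm_num

lemma measurable_ofReal_gdens (μ : E) :
    Measurable (fun x : E => ENNReal.ofReal (gdens d μ x)) :=
  (continuous_gdens μ).measurable.ennreal_ofReal

lemma measurable_ofReal_mdens (θ : E) :
    Measurable (fun x : E => ENNReal.ofReal (mdens d θ x)) :=
  (continuous_mdens θ).measurable.ennreal_ofReal

lemma gaussian_eq (μ : E) :
    gaussian d μ = volume.withDensity (fun x => ENNReal.ofReal (gdens d μ x)) := rfl

lemma symMix_eq (θ : E) :
    symMix d θ = volume.withDensity (fun x => ENNReal.ofReal (mdens d θ x)) := by
  rw [symMix, gaussian_eq, gaussian_eq,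
    ← withDensity_smul' (1/2 : ℝ≥0∞) _ (by norm_num),
    ← withDensity_smul' (1/2 : ℝ≥0∞) _ (by norm_num),
    ← withDensity_add_right _ (((measurable_ofReal_gdens (-θ)).const_smul _))]
  congr 1
  funext x
  have h2 : (1/2 : ℝ≥0∞) = ENNReal.ofReal (1/2) := by
    rw [ENNReal.ofReal_div_of_pos (by norm_num)]
    norm_num
  simp only [Pi.add_apply, Pi.smul_apply, smul_eq_mul, h2,
    ← ENNReal.ofReal_mul (by norm_num : (0:ℝ) ≤ 1/2)]
  rw [← ENNReal.ofReal_add (mul_nonneg (by norm_num) (gdens_pos θ x).le)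
      (mul_nonneg (by norm_num) (gdens_pos (-θ) x).le)]
  congr 1
  rw [mdens_eq_avg]
  ring

lemma integral_withDensity_ofReal {ρ : E → ℝ} (hm : Measurable ρ) (hpos : ∀ x, 0 ≤ ρ x)
    (g : E → ℝ) :
    ∫ x, g x ∂(volume.withDensity fun x => ENNReal.ofReal (ρ x)) = ∫ x, ρ x * g x := by
  rw [show (fun x => ENNReal.ofReal (ρ x)) = (fun x => ((ρ x).toNNReal : ℝ≥0∞)) from rfl,
    integral_withDensity_eq_integral_smul hm.real_toNNReal g]
  congr 1
  funext x
  rw [NNReal.smul_def, Real.coe_toNNReal _ (hpos x), smul_eq_mul]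

lemma integrable_withDensity_ofReal {ρ : E → ℝ} (hm : Measurable ρ) (hpos : ∀ x, 0 ≤ ρ x)
    {g : E → ℝ} :
    Integrable g (volume.withDensity fun x => ENNReal.ofReal (ρ x)) ↔
      Integrable (fun x => ρ x * g x) volume := by
  rw [show (fun x => ENNReal.ofReal (ρ x)) = (fun x => ((ρ x).toNNReal : ℝ≥0∞)) from rfl,
    integrable_withDensity_iff_integrable_smul hm.real_toNNReal]
  constructor <;> intro h <;> refine h.congr (Filter.Eventually.of_forall fun x => ?_) <;>
    simp only [NNReal.smul_def, Real.coe_toNNReal _ (hpos x), smul_eq_mul]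

instance (μ : E) : IsProbabilityMeasure (gaussian d μ) := by
  constructor
  rw [gaussian_eq, withDensity_apply _ MeasurableSet.univ, setLIntegral_univ,
    ← ofReal_integral_eq_lintegral_ofReal (integrable_gdens μ)
      (Filter.Eventually.of_forall fun x => (gdens_pos μ x).le),
    integral_gdens]
  simp

instance (θ : E) : IsProbabilityMeasure (symMix d θ) := by
  constructor
  rw [symMix_eq, withDensity_apply _ MeasurableSet.univ, setLIntegral_univ,
    ← ofReal_integral_eq_lintegral_ofReal (integrable_mdens θ)
      (Filter.Eventually.of_forall fun x => (mdens_pos θ x).le),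
    integral_mdens]
  simp

lemma le_two_mul_exp_sq {t : ℝ} (ht : 0 ≤ t) : t ≤ 2 * Real.exp (t ^ 2 / 4) := by
  rcases le_or_gt t 2 with h | h
  · nlinarith [Real.one_le_exp (by positivity : (0:ℝ) ≤ t ^ 2 / 4)]
  · nlinarith [Real.add_one_le_exp (t ^ 2 / 4)]

lemma integrable_gdens_mul (μ : E) {f : E → ℝ} (hf : AEStronglyMeasurable f volume)
    {C : ℝ} (hC : ∀ x, |f x| ≤ C * (1 + ‖x‖)) :
    Integrable (fun x => gdens d μ x * f x) := by
  have hC0 : 0 ≤ C := by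
    have h0 := (abs_nonneg (f 0)).trans (hC 0)
    nlinarith [norm_nonneg (0 : E)]
  have hint : Integrable
      (fun x : E => gaussConst d * (C * (3 + ‖μ‖)) * Real.exp (-‖x - μ‖ ^ 2 / 4)) := by
    refine Integrable.const_mul ?_ _
    have h := (integrable_exp_neg_mul_sq_norm (d := d) (b := (1/4 : ℝ))
      (by norm_num)).comp_sub_right μ
    refine h.congr (Filter.Eventually.of_forall fun x => ?_)
    ring_nf
  refine hint.mono' (((continuous_gdens μ).aestronglyMeasurable).mul hf)
    (Filter.Eventually.of_forall fun x => ?_)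
  have ht0 : (0:ℝ) ≤ ‖x - μ‖ := norm_nonneg _
  have hxle : ‖x‖ ≤ ‖μ‖ + ‖x - μ‖ := by
    calc ‖x‖ = ‖μ + (x - μ)‖ := by rw [add_sub_cancel]
      _ ≤ ‖μ‖ + ‖x - μ‖ := norm_add_le _ _
  have e1 : (1:ℝ) ≤ Real.exp (‖x - μ‖ ^ 2 / 4) := Real.one_le_exp (by positivity)
  have e2 := le_two_mul_exp_sq ht0
  have h1 : 1 + ‖x‖ ≤ (3 + ‖μ‖) * Real.exp (‖x - μ‖ ^ 2 / 4) := by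
    nlinarith [mul_nonneg (by positivity : (0:ℝ) ≤ 1 + ‖μ‖) (sub_nonneg.2 e1)]
  have hkey : Real.exp (-‖x - μ‖ ^ 2 / 2) * (1 + ‖x‖)
      ≤ (3 + ‖μ‖) * Real.exp (-‖x - μ‖ ^ 2 / 4) := by
    calc Real.exp (-‖x - μ‖ ^ 2 / 2) * (1 + ‖x‖)
        ≤ Real.exp (-‖x - μ‖ ^ 2 / 2) * ((3 + ‖μ‖) * Real.exp (‖x - μ‖ ^ 2 / 4)) :=
          mul_le_mul_of_nonneg_left h1 (Real.exp_pos _).le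
      _ = (3 + ‖μ‖) * (Real.exp (-‖x - μ‖ ^ 2 / 2) * Real.exp (‖x - μ‖ ^ 2 / 4)) := by ring
      _ = (3 + ‖μ‖) * Real.exp (-‖x - μ‖ ^ 2 / 4) := by
          rw [← Real.exp_add]
          congr 1
          ring_nf
  calc ‖gdens d μ x * f x‖ = gdens d μ x * |f x| := by
        rw [norm_mul, Real.norm_eq_abs, Real.norm_eq_abs, abs_of_pos (gdens_pos μ x)]
    _ ≤ gdens d μ x * (C * (1 + ‖x‖)) :=
        mul_le_mul_of_nonneg_left (hC x) (gdens_pos μ x).le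
    _ = gaussConst d * C * (Real.exp (-‖x - μ‖ ^ 2 / 2) * (1 + ‖x‖)) := by
        unfold gdens; ring
    _ ≤ gaussConst d * C * ((3 + ‖μ‖) * Real.exp (-‖x - μ‖ ^ 2 / 4)) :=
        mul_le_mul_of_nonneg_left hkey (mul_nonneg (gaussConst_pos d).le hC0)
    _ = gaussConst d * (C * (3 + ‖μ‖)) * Real.exp (-‖x - μ‖ ^ 2 / 4) := by ring

lemma abs_log_cosh_le (t : ℝ) : |Real.log (Real.cosh t)| ≤ |t| := by
  rw [abs_of_nonneg (Real.log_nonneg (Real.one_le_cosh t))]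
  have h2 : Real.cosh t ≤ Real.exp |t| := by
    rw [Real.cosh_eq]
    have e1 := Real.exp_le_exp.2 (le_abs_self t)
    have e2 := Real.exp_le_exp.2 (neg_le_abs t)
    linarith
  calc Real.log (Real.cosh t) ≤ Real.log (Real.exp |t|) :=
        Real.log_le_log (Real.cosh_pos t) h2
    _ = |t| := Real.log_exp _

lemma continuous_logcosh (θ : E) :
    Continuous (fun x : E => Real.log (Real.cosh ⟪θ, x⟫)) := by
  have h1 : Continuous (fun x : E => ⟪θ, x⟫) := continuous_const.inner continuous_id
  exact (Real.continuous_cosh.comp h1).log fun x => (Real.cosh_pos _).ne'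

lemma abs_logcosh_le' (θ x : E) :
    |Real.log (Real.cosh ⟪θ, x⟫)| ≤ ‖θ‖ * (1 + ‖x‖) := by
  calc |Real.log (Real.cosh ⟪θ, x⟫)| ≤ |⟪θ, x⟫| := abs_log_cosh_le _
    _ ≤ ‖θ‖ * ‖x‖ := abs_real_inner_le_norm θ x
    _ ≤ ‖θ‖ * (1 + ‖x‖) := by nlinarith [norm_nonneg θ, norm_nonneg x]

lemma integrable_gdens_mul_logcosh (μ θ : E) :
    Integrable (fun x => gdens d μ x * Real.log (Real.cosh ⟪θ, x⟫)) :=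
  integrable_gdens_mul μ (continuous_logcosh θ).aestronglyMeasurable
    (fun x => abs_logcosh_le' θ x)

lemma integrable_mdens_mul (θ₀ : E) {f : E → ℝ} (hf : AEStronglyMeasurable f volume)
    {C : ℝ} (hC : ∀ x, |f x| ≤ C * (1 + ‖x‖)) :
    Integrable (fun x => mdens d θ₀ x * f x) := by
  have : Integrable (fun x : E => gdens d θ₀ x * f x / 2 + gdens d (-θ₀) x * f x / 2) :=
    ((integrable_gdens_mul θ₀ hf hC).div_const 2).add
      ((integrable_gdens_mul (-θ₀) hf hC).div_const 2)
  refine this.congr (Filter.Eventually.of_forall fun x => ?_)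
  simp only []
  rw [mdens_eq_avg]; ring

lemma integral_gdens_neg_mul_logcosh (θ₀ θ : E) :
    ∫ x, gdens d (-θ₀) x * Real.log (Real.cosh ⟪θ, x⟫)
      = ∫ x, gdens d θ₀ x * Real.log (Real.cosh ⟪θ, x⟫) := by
  have h := integral_neg_eq_self
    (fun x : E => gdens d (-θ₀) x * Real.log (Real.cosh ⟪θ, x⟫)) volume
  rw [← h]
  congr 1
  funext x
  have h1 : gdens d (-θ₀) (-x) = gdens d θ₀ x := by
    unfold gdens
    rw [show -x - -θ₀ = -(x - θ₀) by abel, norm_neg]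
  have h2 : ⟪θ, -x⟫ = -⟪θ, x⟫ := inner_neg_right θ x
  rw [h1, h2, Real.cosh_neg]

lemma integral_logcosh_symMix (θ₀ θ : E) :
    ∫ x, Real.log (Real.cosh ⟪θ, x⟫) ∂(symMix d θ₀)
      = ∫ x, Real.log (Real.cosh ⟪θ, x⟫) ∂(gaussian d θ₀) := by
  rw [symMix_eq, gaussian_eq,
    integral_withDensity_ofReal (continuous_mdens θ₀).measurable
      (fun x => (mdens_pos θ₀ x).le),
    integral_withDensity_ofReal (continuous_gdens θ₀).measurable
      (fun x => (gdens_pos θ₀ x).le)]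
  have : ∀ x : E, mdens d θ₀ x * Real.log (Real.cosh ⟪θ, x⟫)
      = gdens d θ₀ x * Real.log (Real.cosh ⟪θ, x⟫) / 2
        + gdens d (-θ₀) x * Real.log (Real.cosh ⟪θ, x⟫) / 2 := by
    intro x; rw [mdens_eq_avg]; ring
  rw [integral_congr_ae (Filter.Eventually.of_forall this),
    integral_add ((integrable_gdens_mul_logcosh θ₀ θ).div_const 2)
      ((integrable_gdens_mul_logcosh (-θ₀) θ).div_const 2),
    integral_div, integral_div, integral_gdens_neg_mul_logcosh]
  ring

lemma klDiv_key (θ₀ θ : E) :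
    Ninf d θ₀ θ - Ninf d θ₀ θ₀ = klDiv (symMix d θ₀) (symMix d θ) ∧
      0 ≤ klDiv (symMix d θ₀) (symMix d θ) := by
  have hmeas_r : Measurable fun x : E => ENNReal.ofReal (mdens d θ₀ x / mdens d θ x) :=
    ((continuous_mdens θ₀).div (continuous_mdens θ)
      (fun x => (mdens_pos θ x).ne')).measurable.ennreal_ofReal
  have h1 : (symMix d θ).withDensity
      (fun x => ENNReal.ofReal (mdens d θ₀ x / mdens d θ x)) = symMix d θ₀ := by
    rw [symMix_eq θ, symMix_eq θ₀, ← withDensity_mul _ (measurable_ofReal_mdens θ) hmeas_r]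
    congr 1; funext x
    simp only [Pi.mul_apply]
    rw [← ENNReal.ofReal_mul (mdens_pos θ x).le]
    congr 1
    rw [mul_comm, div_mul_cancel₀ _ (mdens_pos θ x).ne']
  have hac : symMix d θ₀ ≪ symMix d θ := by
    rw [← h1]; exact withDensity_absolutelyContinuous _ _
  have h2 : (symMix d θ₀).rnDeriv (symMix d θ)
      =ᵐ[symMix d θ] fun x => ENNReal.ofReal (mdens d θ₀ x / mdens d θ x) := by
    rw [← h1]; exact Measure.rnDeriv_withDensity _ hmeas_r
  have h3 : (symMix d θ₀).rnDeriv (symMix d θ)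
      =ᵐ[symMix d θ₀] fun x => ENNReal.ofReal (mdens d θ₀ x / mdens d θ x) :=
    h2.filter_mono hac.ae_le
  have h4 : klDiv (symMix d θ₀) (symMix d θ)
      = ∫ x, Real.log (mdens d θ₀ x / mdens d θ x) ∂(symMix d θ₀) := by
    unfold klDiv
    refine integral_congr_ae (h3.mono fun x hx => ?_)
    simp only [hx]
    rw [ENNReal.toReal_ofReal (div_nonneg (mdens_pos θ₀ x).le (mdens_pos θ x).le)]
  have hlogratio : ∀ x : E, Real.log (mdens d θ₀ x / mdens d θ x)
      = (‖θ‖ ^ 2 / 2 - ‖θ₀‖ ^ 2 / 2) + Real.log (Real.cosh ⟪θ₀, x⟫)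
          - Real.log (Real.cosh ⟪θ, x⟫) := by
    intro x
    have c0 : ∀ φ : E, (0:ℝ) < gaussConst d * Real.exp (-‖x‖ ^ 2 / 2 - ‖φ‖ ^ 2 / 2)
        * Real.cosh ⟪φ, x⟫ := fun φ => mdens_pos φ x
    unfold mdens
    rw [Real.log_div (c0 θ₀).ne' (c0 θ).ne',
      Real.log_mul (mul_pos (gaussConst_pos d) (Real.exp_pos _)).ne' (Real.cosh_pos _).ne',
      Real.log_mul (mul_pos (gaussConst_pos d) (Real.exp_pos _)).ne' (Real.cosh_pos _).ne',
      Real.log_mul (gaussConst_pos d).ne' (Real.exp_pos _).ne',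
      Real.log_mul (gaussConst_pos d).ne' (Real.exp_pos _).ne',
      Real.log_exp, Real.log_exp]
    ring
  -- integrability of log cosh terms w.r.t. symMix d θ₀
  have hintlc : ∀ φ : E, Integrable (fun x => Real.log (Real.cosh ⟪φ, x⟫)) (symMix d θ₀) := by
    intro φ
    rw [symMix_eq]
    exact (integrable_withDensity_ofReal (continuous_mdens θ₀).measurable
      (fun x => (mdens_pos θ₀ x).le)).2
      (integrable_mdens_mul θ₀ (continuous_logcosh φ).aestronglyMeasurable
        (fun x => abs_logcosh_le' φ x))
  have hsplit : ∫ x, Real.log (mdens d θ₀ x / mdens d θ x) ∂(symMix d θ₀)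
      = (‖θ‖ ^ 2 / 2 - ‖θ₀‖ ^ 2 / 2)
        + ∫ x, Real.log (Real.cosh ⟪θ₀, x⟫) ∂(symMix d θ₀)
        - ∫ x, Real.log (Real.cosh ⟪θ, x⟫) ∂(symMix d θ₀) := by
    have hi1 : Integrable (fun x : E => (‖θ‖ ^ 2 / 2 - ‖θ₀‖ ^ 2 / 2)
        + Real.log (Real.cosh ⟪θ₀, x⟫)) (symMix d θ₀) := (integrable_const _).add (hintlc θ₀)
    rw [integral_congr_ae (Filter.Eventually.of_forall hlogratio),
      integral_sub hi1 (hintlc θ),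
      integral_add (integrable_const _) (hintlc θ₀), integral_const]
    simp [measure_univ]
  have heq : Ninf d θ₀ θ - Ninf d θ₀ θ₀ = klDiv (symMix d θ₀) (symMix d θ) := by
    rw [h4, hsplit, integral_logcosh_symMix θ₀ θ₀, integral_logcosh_symMix θ₀ θ]
    unfold Ninf
    rw [real_inner_self_eq_norm_sq, real_inner_self_eq_norm_sq]
    ring
  refine ⟨heq, ?_⟩
  rw [h4]
  -- Gibbs' inequality
  have hdivint : Integrable (fun x => mdens d θ x / mdens d θ₀ x) (symMix d θ₀) := by
    rw [symMix_eq]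
    refine (integrable_withDensity_ofReal (continuous_mdens θ₀).measurable
      (fun x => (mdens_pos θ₀ x).le)).2 ?_
    refine (integrable_mdens θ).congr (Filter.Eventually.of_forall fun x => ?_)
    simp only []
    rw [mul_comm, div_mul_cancel₀ _ (mdens_pos θ₀ x).ne']
  have hint1 : Integrable (fun x => Real.log (mdens d θ₀ x / mdens d θ x)) (symMix d θ₀) := by
    rw [show (fun x => Real.log (mdens d θ₀ x / mdens d θ x))
        = fun x => (‖θ‖ ^ 2 / 2 - ‖θ₀‖ ^ 2 / 2) + Real.log (Real.cosh ⟪θ₀, x⟫)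
          - Real.log (Real.cosh ⟪θ, x⟫) from funext hlogratio]
    exact ((integrable_const _).add (hintlc θ₀)).sub (hintlc θ)
  have hint2 : Integrable (fun x => 1 - mdens d θ x / mdens d θ₀ x) (symMix d θ₀) :=
    (integrable_const 1).sub hdivint
  have hpt : ∀ x : E, 1 - mdens d θ x / mdens d θ₀ x
      ≤ Real.log (mdens d θ₀ x / mdens d θ x) := by
    intro x
    have hpos1 := mdens_pos (d := d) θ₀ x
    have hpos2 := mdens_pos (d := d) θ x
    have hlog := Real.log_le_sub_one_of_pos (div_pos hpos2 hpos1)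
    have hrw : Real.log (mdens d θ₀ x / mdens d θ x)
        = - Real.log (mdens d θ x / mdens d θ₀ x) := by
      rw [Real.log_div hpos1.ne' hpos2.ne', Real.log_div hpos2.ne' hpos1.ne']
      ring
    rw [hrw]
    linarith
  have hdiv_val : ∫ x, mdens d θ x / mdens d θ₀ x ∂(symMix d θ₀) = 1 := by
    rw [symMix_eq, integral_withDensity_ofReal (continuous_mdens θ₀).measurable
      (fun x => (mdens_pos θ₀ x).le)]
    rw [show (fun x : E => mdens d θ₀ x * (mdens d θ x / mdens d θ₀ x))
        = fun x => mdens d θ x from funext fun x => by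
          rw [mul_comm, div_mul_cancel₀ _ (mdens_pos θ₀ x).ne']]
    exact integral_mdens θ
  have h0 : (0:ℝ) = ∫ x, 1 - mdens d θ x / mdens d θ₀ x ∂(symMix d θ₀) := by
    rw [integral_sub (integrable_const 1) hdivint, hdiv_val, integral_const]
    simp [measure_univ]
  rw [h0]
  exact integral_mono hint2 hint1 hpt

end Helpers

/-- `N_∞(θ) − N_∞(θ₀) = KL(P̄_{θ₀} ‖ P̄_θ) ≥ 0`; in particular `θ₀`
minimizes `N_∞`. -/
theorem Ninf_sub_eq_klDiv (d : ℕ) (θ₀ : EuclideanSpace ℝ (Fin d)) :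
    (∀ θ, Ninf d θ₀ θ - Ninf d θ₀ θ₀ = klDiv (symMix d θ₀) (symMix d θ) ∧
      0 ≤ klDiv (symMix d θ₀) (symMix d θ)) ∧
    ∀ θ, Ninf d θ₀ θ₀ ≤ Ninf d θ₀ θ := by
  refine ⟨fun θ => klDiv_key θ₀ θ, fun θ => ?_⟩
  have h := klDiv_key θ₀ θ
  linarith [h.1, h.2]
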